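/- arXiv:2506.17883 — 4 statements merged into one kernel-verified Lean document; each statement's English description precedes it below -/
import Mathlib

section
/- If (r_c, θ_c) ∈ ℝ^d × ℝ^d is a stationary point of the cost function f (i.e. all 2d partial derivatives of f vanish at (r_c, θ_c)) with r_c ≠ 0, then f(r_c, θ_c) = 0; since f is nonnegative everywhere, (r_c, θ_c) is a global minimum of f. -/
/-!
Since `K(r, θ)` is linear in `r`, the cost `f` is homogeneous of degree 4 in `r`, so Euler's
identity gives `Df(r, θ)(r, 0) = 4 f(r, θ)`. At a stationary point the left side vanishes, being a
combination of the partial derivatives in `r`; hence `f = 0` there, the minimum of `f ≥ 0`.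
-/

open Matrix Complex
open scoped Classical

noncomputable section

/-- Single-qubit Pauli matrices: `0 ↦ I`, `1 ↦ X`, `2 ↦ Y`, `3 ↦ Z`. -/
def pauli1 (a : Fin 4) : Matrix (Fin 2) (Fin 2) ℂ :=
  if a = 0 then 1
  else if a = 1 then !![0, 1; 1, 0]
  else if a = 2 then !![0, -Complex.I; Complex.I, 0]
  else !![1, 0; 0, -1]

/-- The `n`-qubit Pauli string `σ^{(1)} ⊗ ⋯ ⊗ σ^{(n)}` associated to `s : Fin n → Fin 4`,
realized as a matrix on the `(Fin n → Fin 2)`-indexed space of dimension `2^n`. -/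
def pauliOp {n : ℕ} (s : Fin n → Fin 4) :
    Matrix (Fin n → Fin 2) (Fin n → Fin 2) ℂ :=
  Matrix.of fun i j => ∏ k, pauli1 (s k) (i k) (j k)

/-- `G₁`: the off-diagonal Pauli strings (some factor is `X` or `Y`). -/
def G1 (n : ℕ) : Finset (Fin n → Fin 4) :=
  Finset.univ.filter fun s => ∃ k, s k = 1 ∨ s k = 2

/-- The diagonal Pauli strings (every factor is `I` or `Z`). -/
def DiagStrings (n : ℕ) : Finset (Fin n → Fin 4) :=
  Finset.univ.filter fun s => ∀ k, s k = 0 ∨ s k = 3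

variable {n d : ℕ}

/-- `K(r,θ) = Σ_j r_j e^{iθ_j} P_j`. -/
def Kmat (P : Fin d → Fin n → Fin 4) (x : (Fin d → ℝ) × (Fin d → ℝ)) :
    Matrix (Fin n → Fin 2) (Fin n → Fin 2) ℂ :=
  ∑ j, ((x.1 j : ℂ) * Complex.exp (Complex.I * (x.2 j : ℂ))) • pauliOp (P j)

/-- The cost function `f(r,θ) = Σ_{P ∈ G₁} tr(K(r,θ)† H K(r,θ) P)²` (the traces being real). -/
def costf (H : Matrix (Fin n → Fin 2) (Fin n → Fin 2) ℂ)
    (P : Fin d → Fin n → Fin 4) (x : (Fin d → ℝ) × (Fin d → ℝ)) : ℝ :=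
  ∑ Q ∈ G1 n, (((Kmat P x)ᴴ * H * Kmat P x * pauliOp Q).trace.re) ^ 2

/-- `φ_P(r,θ) = 2^{-n} tr(K(r,θ)† K(r,θ) P)` (real). -/
def phi (P : Fin d → Fin n → Fin 4) (Q : Fin n → Fin 4)
    (x : (Fin d → ℝ) × (Fin d → ℝ)) : ℝ :=
  (1 / 2 ^ n) * ((Kmat P x)ᴴ * Kmat P x * pauliOp Q).trace.re

/-- `G₂`: non-identity Pauli strings `Q` with `P_i P_j ∈ {Q, -Q, iQ, -iQ}` for some `i, j`. -/
def G2 (P : Fin d → Fin n → Fin 4) : Finset (Fin n → Fin 4) :=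
  Finset.univ.filter fun Q => Q ≠ (fun _ => 0) ∧ ∃ i j : Fin d, ∃ c : ℂ,
    (c = 1 ∨ c = -1 ∨ c = Complex.I ∨ c = -Complex.I) ∧
    pauliOp (P i) * pauliOp (P j) = c • pauliOp Q

/-- The total cost function `F = f + Σ_{P ∈ G₂} φ_P²`. -/
def totalF (H : Matrix (Fin n → Fin 2) (Fin n → Fin 2) ℂ)
    (P : Fin d → Fin n → Fin 4) (x : (Fin d → ℝ) × (Fin d → ℝ)) : ℝ :=
  costf H P x + ∑ Q ∈ G2 P, phi P Q x ^ 2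

end

section Euler

variable {E F G : Type*} [NormedAddCommGroup E] [NormedSpace ℝ E]
  [NormedAddCommGroup F] [NormedSpace ℝ F] [NormedAddCommGroup G] [NormedSpace ℝ G]

theorem HasFDerivAt.apply_self_eq_of_homogeneous {f : E → G} {f' : E →L[ℝ] G} {x : E} {k : ℕ}
    (hf : HasFDerivAt f f' x) (hhom : ∀ t : ℝ, f (t • x) = t ^ k • f x) :
    f' x = k • f x := by
  have hray : HasDerivAt (fun t : ℝ => t • x) x 1 := by
    simpa using (hasDerivAt_id (1 : ℝ)).smul_const x
  have hcomp : HasDerivAt (fun t : ℝ => f (t • x)) (f' x) 1 :=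
    (one_smul ℝ x ▸ hf).comp_hasDerivAt 1 hray
  have hpow : HasDerivAt (fun t : ℝ => f (t • x)) (k • f x) 1 := by
    simp only [hhom, ← Nat.cast_smul_eq_nsmul ℝ]
    simpa using (hasDerivAt_pow k (1 : ℝ)).smul_const (f x)
  exact hcomp.unique hpow

theorem HasFDerivAt.apply_inl_eq_of_homogeneous_fst {f : E × F → G} {f' : E × F →L[ℝ] G}
    {x : E × F} {k : ℕ} (hf : HasFDerivAt f f' x)
    (hhom : ∀ t : ℝ, f (t • x.1, x.2) = t ^ k • f x) :
    f' (x.1, 0) = k • f x := by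
  have hslice : HasFDerivAt (fun v : E => f (v, x.2)) (f'.comp (.inl ℝ E F)) x.1 :=
    hf.comp x.1 ((hasFDerivAt_id x.1).prodMk (hasFDerivAt_const x.2 x.1))
  simpa using hslice.apply_self_eq_of_homogeneous hhom

end Euler

theorem LinearMap.apply_inl_eq_zero_of_single {ι R M N : Type*} [Fintype ι] [DecidableEq ι]
    [Semiring R] [AddCommMonoid M] [Module R M] [AddCommMonoid N] [Module R N]
    (L : (ι → R) × M →ₗ[R] N) (hL : ∀ j, L (Pi.single j 1, 0) = 0) (v : ι → R) :
    L (v, 0) = 0 := by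
  have hv : ((v, 0) : (ι → R) × M) = ∑ j, v j • ((Pi.single j 1 : ι → R), (0 : M)) := by
    ext
    · simp [Prod.fst_sum, Pi.single_apply]
    · simp [Prod.snd_sum]
  rw [hv, map_sum]
  exact Finset.sum_eq_zero fun j _ => by rw [map_smul, hL, smul_zero]

theorem differentiable_Kmat_apply (P : Fin d → Fin n → Fin 4) (a b : Fin n → Fin 2) :
    Differentiable ℝ fun x => Kmat P x a b := by
  simp only [Kmat, Matrix.sum_apply, Matrix.smul_apply, smul_eq_mul]
  fun_prop

theorem differentiable_costf (H : Matrix (Fin n → Fin 2) (Fin n → Fin 2) ℂ)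
    (P : Fin d → Fin n → Fin 4) : Differentiable ℝ (costf H P) := by
  have hK := differentiable_Kmat_apply P
  unfold costf
  simp only [Matrix.trace, Matrix.diag, Matrix.mul_apply, Matrix.conjTranspose_apply]
  fun_prop

theorem Kmat_smul_fst (P : Fin d → Fin n → Fin 4) (x : (Fin d → ℝ) × (Fin d → ℝ)) (t : ℝ) :
    Kmat P (t • x.1, x.2) = (t : ℂ) • Kmat P x := by
  simp only [Kmat, Finset.smul_sum, smul_smul, Pi.smul_apply, smul_eq_mul, Complex.ofReal_mul,
    mul_assoc]

theorem costf_smul_fst (H : Matrix (Fin n → Fin 2) (Fin n → Fin 2) ℂ)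
    (P : Fin d → Fin n → Fin 4) (x : (Fin d → ℝ) × (Fin d → ℝ)) (t : ℝ) :
    costf H P (t • x.1, x.2) = t ^ 4 * costf H P x := by
  have hscale : ∀ Q : Fin n → Fin 4,
      ((t : ℂ) • Kmat P x)ᴴ * H * ((t : ℂ) • Kmat P x) * pauliOp Q
        = ((t ^ 2 : ℝ) : ℂ) • ((Kmat P x)ᴴ * H * Kmat P x * pauliOp Q) := fun Q => by
    simp only [conjTranspose_smul, Matrix.smul_mul, Matrix.mul_smul, smul_smul, star_def,
      conj_ofReal]
    push_cast
    ring_nf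
  simp only [costf, Kmat_smul_fst, hscale, trace_smul, smul_eq_mul, re_ofReal_mul, mul_pow,
    Finset.mul_sum]
  ring_nf

theorem costf_nonneg (H : Matrix (Fin n → Fin 2) (Fin n → Fin 2) ℂ)
    (P : Fin d → Fin n → Fin 4) (x : (Fin d → ℝ) × (Fin d → ℝ)) : 0 ≤ costf H P x :=
  Finset.sum_nonneg fun _ _ => sq_nonneg _

theorem statement1_general {n d : ℕ}
    (H : Matrix (Fin n → Fin 2) (Fin n → Fin 2) ℂ)
    (P : Fin d → Fin n → Fin 4)
    (x : (Fin d → ℝ) × (Fin d → ℝ))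
    (hstat : ∀ j : Fin d,
      fderiv ℝ (costf H P) x (Pi.single j 1, 0) = 0 ∧
      fderiv ℝ (costf H P) x (0, Pi.single j 1) = 0) :
    costf H P x = 0 ∧ ∀ y : (Fin d → ℝ) × (Fin d → ℝ), costf H P x ≤ costf H P y := by
  have hEuler : fderiv ℝ (costf H P) x (x.1, 0) = 4 • costf H P x :=
    (differentiable_costf H P x).hasFDerivAt.apply_inl_eq_of_homogeneous_fst
      (costf_smul_fst H P x)
  have hradial : fderiv ℝ (costf H P) x (x.1, 0) = 0 :=
    (fderiv ℝ (costf H P) x).toLinearMap.apply_inl_eq_zero_of_single (fun j => (hstat j).1) x.1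
  have hzero : costf H P x = 0 := by
    simpa [hradial] using hEuler.symm
  exact ⟨hzero, fun y => by rw [hzero]; exact costf_nonneg H P y⟩

/-- any stationary point `(r_c, θ_c)` of the cost function `f` with `r_c ≠ 0`
satisfies `f(r_c,θ_c) = 0`, and hence is a global minimum of the nonnegative function `f`. -/
theorem statement1 {n d : ℕ} (hn : 1 ≤ n)
    (H : Matrix (Fin n → Fin 2) (Fin n → Fin 2) ℂ) (hH : H.IsHermitian)
    (P : Fin d → Fin n → Fin 4) (hP : Function.Injective P)
    (x : (Fin d → ℝ) × (Fin d → ℝ))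
    (hstat : ∀ j : Fin d,
      fderiv ℝ (costf H P) x (Pi.single j 1, 0) = 0 ∧
      fderiv ℝ (costf H P) x (0, Pi.single j 1) = 0)
    (hr : x.1 ≠ 0) :
    costf H P x = 0 ∧ ∀ y : (Fin d → ℝ) × (Fin d → ℝ), costf H P x ≤ costf H P y :=
  statement1_general H P x hstat
end

section
/- A non-zero global minimum of the total cost function F always exists when the ansatz is the full Pauli basis: there exist r, θ ∈ ℝ^{4ⁿ} with ‖r‖ = 1 and F(r,θ) = 0. In fact, for any unitary U such that U† H U is diagonal (such U exists by the spectral theorem for Hermitian matrices), writing the Pauli-basis coefficients of U in polar form, tr(U P_j)/2ⁿ = r_j e^{iθ_j}, yields such a point, and K(r,θ) = U. -/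
open Matrix Complex
open scoped Classical

/-!
Pauli strings are Hermitian, orthogonal for the trace form (`tr(P_s P_t) = 2ⁿ δ_{st}`) and
complete, so every matrix `A` equals `Σ_s 2⁻ⁿ tr(A P_s) P_s`. Hence the polar Pauli coefficients
of a unitary `U` give `K(r,θ) = U`, and Parseval's identity `tr(K†K) = 2ⁿ Σ_j r_j²` yields
`‖r‖ = 1`. If moreover `U†HU` is diagonal, every `tr(U†HU P)` with `P` off-diagonal vanishes,
since such `P` has zero diagonal; and `φ_P = 2⁻ⁿ tr(P) = 0` for every non-identity `P`.
So `F(r,θ) = 0`, and such a `U` exists by the spectral theorem.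
-/

namespace Matrix

variable {ι m R : Type*} [Fintype ι] [DecidableEq ι] [Fintype m] [CommSemiring R]

lemma trace_of_prod_apply (A : ι → Matrix m m R) :
    trace (of fun i j : ι → m => ∏ k, A k (i k) (j k)) = ∏ k, trace (A k) := by
  simp only [trace, diag_apply, of_apply, Fintype.prod_sum]

lemma of_prod_apply_mul_of_prod_apply (A B : ι → Matrix m m R) :
    (of fun i j : ι → m => ∏ k, A k (i k) (j k)) * (of fun i j : ι → m => ∏ k, B k (i k) (j k)) =
      of fun i j => ∏ k, (A k * B k) (i k) (j k) := by
  ext i j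
  simp only [mul_apply, of_apply, ← Finset.prod_mul_distrib, Fintype.prod_sum]

lemma IsHermitian.exists_unitary_conjTranspose_mul_mul_isDiag {𝕜 : Type*} [RCLike 𝕜]
    [DecidableEq m] {A : Matrix m m 𝕜} (hA : A.IsHermitian) :
    ∃ U : Matrix m m 𝕜, Uᴴ * U = 1 ∧ (Uᴴ * A * U).IsDiag := by
  refine ⟨hA.eigenvectorUnitary, hA.eigenvectorUnitary.prop.1, ?_⟩
  have h := hA.conjStarAlgAut_star_eigenvectorUnitary
  rw [Unitary.conjStarAlgAut_star_apply, star_eq_conjTranspose] at h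
  exact h ▸ isDiag_diagonal _

end Matrix

lemma pauli1_conjTranspose (a : Fin 4) : (pauli1 a)ᴴ = pauli1 a := by
  ext i j
  fin_cases a <;> fin_cases i <;> fin_cases j <;> simp [pauli1, one_apply]

lemma trace_pauli1 (a : Fin 4) : (pauli1 a).trace = if a = 0 then 2 else 0 := by
  fin_cases a <;> simp [pauli1, trace, Fin.sum_univ_two]

lemma trace_pauli1_mul (a b : Fin 4) :
    (pauli1 a * pauli1 b).trace = if a = b then 2 else 0 := by
  fin_cases a <;> fin_cases b <;> simp [pauli1, trace, Fin.sum_univ_two] <;> ring_nf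

lemma sum_pauli1_apply_mul_pauli1_apply (i j k l : Fin 2) :
    ∑ a, pauli1 a i j * pauli1 a k l = if i = l ∧ j = k then 2 else 0 := by
  fin_cases i <;> fin_cases j <;> fin_cases k <;> fin_cases l <;>
    simp [pauli1, Fin.sum_univ_four, one_apply] <;> ring_nf

lemma pauli1_apply_self_eq_zero {a : Fin 4} (ha : a = 1 ∨ a = 2) (i : Fin 2) :
    pauli1 a i i = 0 := by
  rcases ha with rfl | rfl <;> fin_cases i <;> simp [pauli1]

section PauliStrings

variable {n : ℕ}

lemma pauliOp_conjTranspose (s : Fin n → Fin 4) : (pauliOp s)ᴴ = pauliOp s := by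
  ext i j
  simp only [pauliOp, conjTranspose_apply, of_apply, star_prod]
  exact Finset.prod_congr rfl fun k _ => by
    rw [← conjTranspose_apply, pauli1_conjTranspose]

lemma trace_pauliOp (s : Fin n → Fin 4) :
    (pauliOp s).trace = if s = (fun _ => 0) then 2 ^ n else 0 := by
  simp only [pauliOp, trace_of_prod_apply, trace_pauli1, Fintype.prod_ite_zero,
    Finset.prod_const, Finset.card_univ, Fintype.card_fin, funext_iff]

lemma trace_pauliOp_mul (s t : Fin n → Fin 4) :
    (pauliOp s * pauliOp t).trace = if s = t then 2 ^ n else 0 := by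
  simp only [pauliOp, of_prod_apply_mul_of_prod_apply, trace_of_prod_apply, trace_pauli1_mul,
    Fintype.prod_ite_zero, Finset.prod_const, Finset.card_univ, Fintype.card_fin, funext_iff]

lemma sum_pauliOp_apply_mul_pauliOp_apply (a b i j : Fin n → Fin 2) :
    ∑ s, pauliOp s a b * pauliOp s i j = if a = j ∧ b = i then 2 ^ n else 0 := by
  simp only [pauliOp, of_apply, ← Finset.prod_mul_distrib]
  rw [← Fintype.prod_sum fun k x => pauli1 x (a k) (b k) * pauli1 x (i k) (j k)]
  simp only [sum_pauli1_apply_mul_pauli1_apply, Fintype.prod_ite_zero, Finset.prod_const,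
    Finset.card_univ, Fintype.card_fin, funext_iff, forall_and]

lemma sum_trace_mul_pauliOp_smul (A : Matrix (Fin n → Fin 2) (Fin n → Fin 2) ℂ) :
    ∑ s, ((A * pauliOp s).trace / 2 ^ n) • pauliOp s = A := by
  ext i j
  calc (∑ s, ((A * pauliOp s).trace / 2 ^ n) • pauliOp s) i j
      = ∑ s, ∑ a, ∑ b, A a b / 2 ^ n * (pauliOp s b a * pauliOp s i j) := by
        simp only [Matrix.sum_apply, Matrix.smul_apply, smul_eq_mul, trace, diag_apply, mul_apply,
          Finset.sum_div, Finset.sum_mul]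
        exact Finset.sum_congr rfl fun s _ => Finset.sum_congr rfl fun a _ =>
          Finset.sum_congr rfl fun b _ => by ring
    _ = ∑ a, ∑ b, A a b / 2 ^ n * ∑ s, pauliOp s b a * pauliOp s i j := by
        simp only [Finset.mul_sum]
        rw [Finset.sum_comm]
        exact Finset.sum_congr rfl fun a _ => Finset.sum_comm
    _ = A i j := by
        simp [sum_pauliOp_apply_mul_pauliOp_apply, and_comm, ite_and]

lemma trace_mul_pauliOp_eq_zero_of_isDiag {D : Matrix (Fin n → Fin 2) (Fin n → Fin 2) ℂ}
    (hD : D.IsDiag) {Q : Fin n → Fin 4} (hQ : Q ∈ G1 n) : (D * pauliOp Q).trace = 0 := by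
  obtain ⟨k, hk⟩ : ∃ k, Q k = 1 ∨ Q k = 2 := by simpa [G1] using hQ
  refine Finset.sum_eq_zero fun i _ => Finset.sum_eq_zero fun l _ => ?_
  obtain rfl | hil := eq_or_ne i l
  · exact mul_eq_zero_of_right _ <|
      Finset.prod_eq_zero (Finset.mem_univ k) (pauli1_apply_self_eq_zero hk _)
  · exact mul_eq_zero_of_left (hD hil) _

lemma trace_conjTranspose_mul_self_sum_smul_pauliOp {κ : Type*} [Fintype κ]
    {P : κ → Fin n → Fin 4} (hP : Function.Injective P) (c : κ → ℂ) :
    ((∑ j, c j • pauliOp (P j))ᴴ * ∑ j, c j • pauliOp (P j)).trace =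
      2 ^ n * ∑ j, ((‖c j‖ ^ 2 : ℝ) : ℂ) := by
  simp only [conjTranspose_sum, conjTranspose_smul, pauliOp_conjTranspose, Finset.sum_mul,
    Finset.mul_sum, smul_mul, Matrix.mul_smul, trace_sum, trace_smul, trace_pauliOp_mul,
    hP.eq_iff, smul_eq_mul, mul_ite, mul_zero, Finset.sum_ite_eq', Finset.mem_univ, if_true]
  refine Finset.sum_congr rfl fun j _ => ?_
  rw [ofReal_pow, ← conj_mul', star_def]
  ring

end PauliStrings

section CostFunction

variable {n d : ℕ} (H : Matrix (Fin n → Fin 2) (Fin n → Fin 2) ℂ) (P : Fin d → Fin n → Fin 4)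

lemma Kmat_eq_of_pauli_coeff (hP : Function.Bijective P)
    {U : Matrix (Fin n → Fin 2) (Fin n → Fin 2) ℂ} {r θ : Fin d → ℝ}
    (h : ∀ j, (r j : ℂ) * exp (I * θ j) = (U * pauliOp (P j)).trace / 2 ^ n) :
    Kmat P (r, θ) = U := by
  rw [Kmat]
  simp only [h]
  rw [Fintype.sum_bijective P hP _ (fun s => ((U * pauliOp s).trace / 2 ^ n) • pauliOp s)
    fun _ => rfl]
  exact sum_trace_mul_pauliOp_smul U

lemma sum_sq_eq_one_of_unitary (hP : Function.Injective P) {r θ : Fin d → ℝ}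
    (hU : (Kmat P (r, θ))ᴴ * Kmat P (r, θ) = 1) : ∑ j, r j ^ 2 = 1 := by
  have h : ((Kmat P (r, θ))ᴴ * Kmat P (r, θ)).trace =
      2 ^ n * ∑ j, ((‖(r j : ℂ) * exp (I * θ j)‖ ^ 2 : ℝ) : ℂ) :=
    trace_conjTranspose_mul_self_sum_smul_pauliOp hP _
  rw [hU, trace_one] at h
  simp only [norm_mul, mul_comm I, norm_exp_ofReal_mul_I, mul_one, norm_real, Real.norm_eq_abs,
    sq_abs, Fintype.card_fun, Fintype.card_fin] at h
  push_cast at h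
  exact_mod_cast (mul_eq_left₀ (pow_ne_zero n two_ne_zero)).mp h.symm

lemma costf_eq_zero_of_isDiag {x : (Fin d → ℝ) × (Fin d → ℝ)}
    (hD : ((Kmat P x)ᴴ * H * Kmat P x).IsDiag) : costf H P x = 0 :=
  Finset.sum_eq_zero fun _ hQ => by rw [trace_mul_pauliOp_eq_zero_of_isDiag hD hQ]; simp

lemma phi_eq_zero_of_unitary {x : (Fin d → ℝ) × (Fin d → ℝ)}
    (hU : (Kmat P x)ᴴ * Kmat P x = 1) {Q : Fin n → Fin 4} (hQ : Q ≠ fun _ => 0) :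
    phi P Q x = 0 := by
  rw [phi, hU, one_mul, trace_pauliOp, if_neg hQ]
  simp

lemma totalF_eq_zero_of_unitary_of_isDiag {x : (Fin d → ℝ) × (Fin d → ℝ)}
    (hU : (Kmat P x)ᴴ * Kmat P x = 1) (hD : ((Kmat P x)ᴴ * H * Kmat P x).IsDiag) :
    totalF H P x = 0 := by
  rw [totalF, costf_eq_zero_of_isDiag H P hD, zero_add]
  exact Finset.sum_eq_zero fun Q hQ => by
    rw [phi_eq_zero_of_unitary P hU (Finset.mem_filter.mp hQ).2.1, sq, zero_mul]

lemma Kmat_eq_and_totalF_eq_zero_of_pauli_coeff (hP : Function.Bijective P)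
    {U : Matrix (Fin n → Fin 2) (Fin n → Fin 2) ℂ} (hU : Uᴴ * U = 1) (hD : (Uᴴ * H * U).IsDiag)
    {r θ : Fin d → ℝ} (h : ∀ j, (r j : ℂ) * exp (I * θ j) = (U * pauliOp (P j)).trace / 2 ^ n) :
    Kmat P (r, θ) = U ∧ (∑ j, r j ^ 2 = 1) ∧ totalF H P (r, θ) = 0 := by
  have hK := Kmat_eq_of_pauli_coeff P hP h
  rw [← hK] at hU hD
  exact ⟨hK, sum_sq_eq_one_of_unitary P hP.injective hU,
    totalF_eq_zero_of_unitary_of_isDiag H P hU hD⟩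

end CostFunction

theorem statement7_general {n : ℕ}
    (H : Matrix (Fin n → Fin 2) (Fin n → Fin 2) ℂ) (hH : H.IsHermitian)
    (P : Fin (4 ^ n) → Fin n → Fin 4) (hP : Function.Bijective P) :
    (∃ r θ : Fin (4 ^ n) → ℝ, (∑ j, r j ^ 2 = 1) ∧ totalF H P (r, θ) = 0) ∧
    (∀ U : Matrix (Fin n → Fin 2) (Fin n → Fin 2) ℂ, Uᴴ * U = 1 →
      (Uᴴ * H * U).IsDiag →
      ∀ r θ : Fin (4 ^ n) → ℝ,
        (∀ j, (r j : ℂ) * Complex.exp (Complex.I * (θ j : ℂ)) =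
          (U * pauliOp (P j)).trace / 2 ^ n) →
        Kmat P (r, θ) = U ∧ (∑ j, r j ^ 2 = 1) ∧ totalF H P (r, θ) = 0) := by
  refine ⟨?_, fun U hU hD r θ => Kmat_eq_and_totalF_eq_zero_of_pauli_coeff H P hP hU hD⟩
  obtain ⟨U, hU, hD⟩ := hH.exists_unitary_conjTranspose_mul_mul_isDiag
  let c j := (U * pauliOp (P j)).trace / 2 ^ n
  obtain ⟨-, hnorm, hF⟩ := Kmat_eq_and_totalF_eq_zero_of_pauli_coeff H P hP hU hD
    (r := fun j => ‖c j‖) (θ := fun j => arg (c j))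
    fun j => by rw [mul_comm I]; exact norm_mul_exp_arg_mul_I (c j)
  exact ⟨_, _, hnorm, hF⟩

/-- when the ansatz is the full Pauli basis (`d = 4ⁿ`), a non-zero global
minimum of `F` exists: there are `r, θ` with `‖r‖ = 1` and `F(r,θ) = 0`. Moreover, for any
unitary `U` with `U† H U` diagonal, writing `tr(U P_j)/2ⁿ = r_j e^{iθ_j}` in polar form
yields such a point, with `K(r,θ) = U`. -/
theorem statement7 {n : ℕ} (hn : 1 ≤ n)
    (H : Matrix (Fin n → Fin 2) (Fin n → Fin 2) ℂ) (hH : H.IsHermitian)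
    (P : Fin (4 ^ n) → Fin n → Fin 4) (hP : Function.Bijective P) :
    (∃ r θ : Fin (4 ^ n) → ℝ, (∑ j, r j ^ 2 = 1) ∧ totalF H P (r, θ) = 0) ∧
    (∀ U : Matrix (Fin n → Fin 2) (Fin n → Fin 2) ℂ, Uᴴ * U = 1 →
      (Uᴴ * H * U).IsDiag →
      ∀ r θ : Fin (4 ^ n) → ℝ,
        (∀ j, (r j : ℂ) * Complex.exp (Complex.I * (θ j : ℂ)) =
          (U * pauliOp (P j)).trace / 2 ^ n) →
        Kmat P (r, θ) = U ∧ (∑ j, r j ^ 2 = 1) ∧ totalF H P (r, θ) = 0) :=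
  statement7_general H hH P hP
end

section
/- Let (F_t)_{t≥0} be a sequence of nonnegative real numbers, let α ∈ (1,2) and c > 0 with c·F₀^{α−1} ≤ 1, and suppose F_{t+1} ≤ (1 − c·F_t^{α−1})·F_t for all t ≥ 0. Then for every ε with 0 < ε ≤ F₀ and every natural number T with T ≥ (1/(c·ε^{α−1}))·log(F₀/ε), one has F_T ≤ ε. (This is the sublinear-rate case of the paper's convergence theorem: precision ε is reached after O(ε^{1−α} log(1/ε)) iterations.) -/
/-- sublinear-rate convergence: if `(F_t)` is nonnegative, `α ∈ (1,2)`,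
`c > 0` with `c F₀^{α−1} ≤ 1`, and `F_{t+1} ≤ (1 − c F_t^{α−1}) F_t` for all `t`, then for
any `0 < ε ≤ F₀` and any `T ≥ (1/(c ε^{α−1})) log(F₀/ε)` one has `F_T ≤ ε`. -/
theorem statement17 (F : ℕ → ℝ) (hF : ∀ t, 0 ≤ F t)
    (α : ℝ) (hα1 : 1 < α) (hα2 : α < 2)
    (c : ℝ) (hc : 0 < c) (hc1 : c * F 0 ^ (α - 1) ≤ 1)
    (hrec : ∀ t, F (t + 1) ≤ (1 - c * F t ^ (α - 1)) * F t)
    (ε : ℝ) (hε0 : 0 < ε) (hεF : ε ≤ F 0)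
    (T : ℕ) (hT : 1 / (c * ε ^ (α - 1)) * Real.log (F 0 / ε) ≤ T) :
    F T ≤ ε := by
  by_contra hcon
  push_neg at hcon
  set a := c * ε ^ (α - 1) with ha
  have hα0 : 0 < α - 1 := by linarith
  have hεp : (0:ℝ) < ε ^ (α - 1) := Real.rpow_pos_of_pos hε0 _
  have hapos : 0 < a := mul_pos hc hεp
  have hεF' : ε ^ (α - 1) ≤ F 0 ^ (α - 1) :=
    Real.rpow_le_rpow hε0.le hεF hα0.le
  have ha1 : a ≤ 1 := le_trans (mul_le_mul_of_nonneg_left hεF' hc.le) hc1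
  have hmono : ∀ t, F (t + 1) ≤ F t := by
    intro t
    have h := hrec t
    nlinarith [mul_nonneg hc.le (Real.rpow_nonneg (hF t) (α - 1)), hF t]
  have hanti : Antitone F := antitone_nat_of_succ_le hmono
  have hgt : ∀ t ≤ T, ε < F t := fun t ht => lt_of_lt_of_le hcon (hanti ht)
  have hbound : ∀ t ≤ T, F t ≤ (1 - a) ^ t * F 0 := by
    intro t ht
    induction t with
    | zero => simp
    | succ n ih =>
      have hn : n ≤ T := Nat.le_of_succ_le ht
      have ihn := ih hn
      have hFn : ε < F n := hgt n hn
      have h2 : a ≤ c * F n ^ (α - 1) :=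
        mul_le_mul_of_nonneg_left (Real.rpow_le_rpow hε0.le hFn.le hα0.le) hc.le
      have h1 : F (n + 1) ≤ (1 - a) * F n := by
        have := hrec n
        nlinarith [hF n]
      calc F (n + 1) ≤ (1 - a) * F n := h1
        _ ≤ (1 - a) * ((1 - a) ^ n * F 0) :=
            mul_le_mul_of_nonneg_left ihn (by linarith)
        _ = (1 - a) ^ (n + 1) * F 0 := by ring
  have hexp : (1 - a) ≤ Real.exp (-a) := by linarith [Real.add_one_le_exp (-a)]
  have hpow : (1 - a) ^ T ≤ Real.exp (-(a * T)) := by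
    calc (1 - a) ^ T ≤ (Real.exp (-a)) ^ T := pow_le_pow_left₀ (by linarith) hexp T
      _ = Real.exp (-(a * T)) := by
          rw [← Real.exp_nat_mul]; ring_nf
  have hlog : Real.log (F 0 / ε) ≤ a * T := by
    have h := mul_le_mul_of_nonneg_left hT hapos.le
    have heq : a * (1 / a * Real.log (F 0 / ε)) = Real.log (F 0 / ε) := by
      field_simp
    rw [heq] at h
    exact h
  have hF0pos : 0 < F 0 := lt_of_lt_of_le hε0 hεF
  have hdiv : F 0 / ε ≤ Real.exp (a * T) := by
    rw [← Real.exp_log (div_pos hF0pos hε0)]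
    exact Real.exp_le_exp.mpr hlog
  have hfin : Real.exp (-(a * T)) * F 0 ≤ ε := by
    rw [Real.exp_neg, inv_mul_le_iff₀ (Real.exp_pos _)]
    rw [div_le_iff₀ hε0] at hdiv
    linarith
  have hFT : F T ≤ ε := by
    calc F T ≤ (1 - a) ^ T * F 0 := hbound T le_rfl
      _ ≤ Real.exp (-(a * T)) * F 0 := mul_le_mul_of_nonneg_right hpow hF0pos.le
      _ ≤ ε := hfin
  linarith
end

section
/- Let F : ℝ^d × ℝ^d → ℝ be nonnegative and twice continuously differentiable, and suppose F(s·r, θ) = s⁴·F(r,θ) for all s ∈ ℝ and all (r,θ). Let L > 0 satisfy ‖∇²F(r,θ)‖ ≤ L whenever ‖r‖ ≤ 2. Fix x = (r,θ) with ‖r‖ = 1 and F(x) > 0, and suppose there exist μ > 0 and α ∈ [0,2) such that ‖∇F(x)‖² ≥ 4μ·F(x)^α (uniform Kurdyka–Łojasiewicz condition at x) and F(x) ≤ (μ/16)^{1/(2−α)}. Let a > 0 satisfy a ≤ 2/L, a·‖∇F(x)‖ ≤ 1, and 16·a·F(x) < 1. Write x − a·∇F(x) = (r_y, θ_y). Then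 ‖r_y‖² ≥ 1 − 8a·F(x) > 0, so r_y ≠ 0, and the normalized gradient-descent iterate x⁺ = (r_y/‖r_y‖, θ_y) satisfies F(x⁺) ≤ (1 − μ·a·F(x)^{α−1})·F(x). -/
noncomputable section

/-- The point of `ℝ^d × ℝ^d` (realized as the Euclidean space indexed by `Fin d ⊕ Fin d`)
with radial part `r` and angular part `θ`. -/
def toE {d : ℕ} (r θ : Fin d → ℝ) : EuclideanSpace ℝ (Fin d ⊕ Fin d) :=
  (EuclideanSpace.equiv (Fin d ⊕ Fin d) ℝ).symm (Sum.elim r θ)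

/-- The radial part of a point. -/
def rOf {d : ℕ} (x : EuclideanSpace ℝ (Fin d ⊕ Fin d)) (i : Fin d) : ℝ :=
  EuclideanSpace.equiv (Fin d ⊕ Fin d) ℝ x (Sum.inl i)

/-- The angular part of a point. -/
def thOf {d : ℕ} (x : EuclideanSpace ℝ (Fin d ⊕ Fin d)) (i : Fin d) : ℝ :=
  EuclideanSpace.equiv (Fin d ⊕ Fin d) ℝ x (Sum.inr i)

end

/-!
Along the gradient line `x - t ∇F(x)` Euler's identity `r · ∇_r F = 4F` makes the squared radial
norm `1 - 8tF(x) + t²‖∇_r F(x)‖²`, which stays in `[1 - 8aF(x), 2]`. By homogeneity the Hessian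
bound on `‖r‖ ≤ 2` improves to `D²F(p)(v,v) ≤ L/2 ‖v‖²` on `‖r‖² ≤ 2`, and with `a ≤ 2/L` this gives
the descent `F(y) ≤ F(x) - a/2 ‖∇F(x)‖²`. Normalizing divides `F(y)` by `‖r_y‖⁴ ≥ 1 - 16aF(x)`; the
Kurdyka–Łojasiewicz condition together with `16F(x)² ≤ μF(x)^α` pays for this loss.
-/

open Set

lemma le_add_deriv_mul_add_of_deriv2_le {f f' f'' : ℝ → ℝ} {a K : ℝ} (ha : 0 ≤ a)
    (hf : ∀ t, HasDerivAt f (f' t) t) (hf' : ∀ t, HasDerivAt f' (f'' t) t)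
    (hK : ∀ t ∈ Icc 0 a, f'' t ≤ K) :
    f a ≤ f 0 + f' 0 * a + K * a ^ 2 / 2 := by
  have hcont : ∀ {φ φ' : ℝ → ℝ}, (∀ t, HasDerivAt φ (φ' t) t) → ContinuousOn φ (Icc 0 a) :=
    fun hφ => fun t _ => (hφ t).continuousAt.continuousWithinAt
  have hlin : ∀ t, HasDerivAt (fun t => f' 0 + K * t) K t := fun t => by
    simpa using ((hasDerivAt_id t).const_mul K).const_add (f' 0)
  have hquad : ∀ t, HasDerivAt (fun t => f 0 + f' 0 * t + K * t ^ 2 / 2) (f' 0 + K * t) t :=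
    fun t => by
      have hsq : HasDerivAt (fun t => K * t ^ 2 / 2) (K * t) t :=
        (((hasDerivAt_pow 2 t).const_mul K).div_const 2).congr_deriv (by push_cast; ring)
      simpa using (((hasDerivAt_id t).const_mul (f' 0)).const_add (f 0)).fun_add hsq
  have hf'_le : ∀ t ∈ Icc 0 a, f' t ≤ f' 0 + K * t :=
    image_le_of_deriv_right_le_deriv_boundary (hcont hf') (fun t _ => (hf' t).hasDerivWithinAt)
      (by simp) (hcont hlin) (fun t _ => (hlin t).hasDerivWithinAt)
      (fun t ht => hK t (Ico_subset_Icc_self ht))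
  exact image_le_of_deriv_right_le_deriv_boundary (hcont hf) (fun t _ => (hf t).hasDerivWithinAt)
    (by simp) (hcont hquad) (fun t _ => (hquad t).hasDerivWithinAt)
    (fun t ht => hf'_le t (Ico_subset_Icc_self ht)) (right_mem_Icc.2 ha)

section LineDerivatives

variable {E : Type*} [NormedAddCommGroup E] [NormedSpace ℝ E] {F : E → ℝ}

lemma hasDerivAt_line (p v : E) (t : ℝ) : HasDerivAt (fun s : ℝ => p + s • v) v t := by
  simpa using ((hasDerivAt_id t).smul_const v).const_add p

lemma hasDerivAt_comp_line (hF : Differentiable ℝ F) (p v : E) (t : ℝ) :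
    HasDerivAt (fun s => F (p + s • v)) (fderiv ℝ F (p + t • v) v) t :=
  (hF _).hasFDerivAt.comp_hasDerivAt t (hasDerivAt_line p v t)

lemma hasDerivAt_fderiv_comp_line (hF : Differentiable ℝ (fderiv ℝ F)) (p v : E) (t : ℝ) :
    HasDerivAt (fun s => fderiv ℝ F (p + s • v) v) (fderiv ℝ (fderiv ℝ F) (p + t • v) v v) t := by
  simpa using ((hF _).hasFDerivAt.comp_hasDerivAt t (hasDerivAt_line p v t)).clm_apply
    (hasDerivAt_const t v)

lemma fderiv_fderiv_apply_eq_of_comp_line_eq (hF : Differentiable ℝ F)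
    (hF' : Differentiable ℝ (fderiv ℝ F)) {p q v w : E} {c : ℝ}
    (h : ∀ s : ℝ, F (p + s • v) = c * F (q + s • w)) :
    fderiv ℝ (fderiv ℝ F) p v v = c * fderiv ℝ (fderiv ℝ F) q w w := by
  have h' : ∀ t : ℝ, fderiv ℝ F (p + t • v) v = c * fderiv ℝ F (q + t • w) w := fun t => by
    have hp := hasDerivAt_comp_line hF p v t
    rw [funext h] at hp
    exact hp.unique ((hasDerivAt_comp_line hF q w t).const_mul c)
  have hp := hasDerivAt_fderiv_comp_line hF' p v 0
  rw [funext h'] at hp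
  simpa using hp.unique ((hasDerivAt_fderiv_comp_line hF' q w 0).const_mul c)

lemma apply_add_smul_le (hF : Differentiable ℝ F) (hF' : Differentiable ℝ (fderiv ℝ F))
    (x v : E) {a K : ℝ} (ha : 0 ≤ a)
    (hK : ∀ t ∈ Icc 0 a, fderiv ℝ (fderiv ℝ F) (x + t • v) v v ≤ K) :
    F (x + a • v) ≤ F x + fderiv ℝ F x v * a + K * a ^ 2 / 2 := by
  simpa using le_add_deriv_mul_add_of_deriv2_le ha (hasDerivAt_comp_line hF x v)
    (hasDerivAt_fderiv_comp_line hF' x v) hK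

lemma apply_sub_smul_gradient_le {E : Type*} [NormedAddCommGroup E] [InnerProductSpace ℝ E]
    [CompleteSpace E] {F : E → ℝ} (hF : Differentiable ℝ F)
    (hF' : Differentiable ℝ (fderiv ℝ F)) (x : E) {a L : ℝ} (ha : 0 ≤ a) (haL : a * L ≤ 2)
    (hL : ∀ t ∈ Icc 0 a,
      fderiv ℝ (fderiv ℝ F) (x - t • gradient F x) (gradient F x) (gradient F x)
        ≤ L / 2 * ‖gradient F x‖ ^ 2) :
    F (x - a • gradient F x) ≤ F x - a / 2 * ‖gradient F x‖ ^ 2 := by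
  set g := gradient F x
  have hstep := apply_add_smul_le hF hF' x (-g) ha (K := L / 2 * ‖g‖ ^ 2) fun t ht => by
    simpa [← sub_eq_add_neg] using hL t ht
  have hfg : fderiv ℝ F x g = ‖g‖ ^ 2 := by
    rw [← inner_gradient_left, real_inner_self_eq_norm_sq]
  rw [smul_neg, ← sub_eq_add_neg, map_neg, hfg] at hstep
  nlinarith [mul_le_mul_of_nonneg_right haL (by positivity : 0 ≤ a * ‖g‖ ^ 2)]

end LineDerivatives

section RadialCoordinates

variable {d : ℕ}

local notation "𝔼" => EuclideanSpace ℝ (Fin d ⊕ Fin d)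

@[simp] lemma rOf_toE (r θ : Fin d → ℝ) : rOf (toE r θ) = r := rfl

@[simp] lemma thOf_toE (r θ : Fin d → ℝ) : thOf (toE r θ) = θ := rfl

@[simp] lemma rOf_add (v w : 𝔼) : rOf (v + w) = rOf v + rOf w := rfl

@[simp] lemma thOf_add (v w : 𝔼) : thOf (v + w) = thOf v + thOf w := rfl

@[simp] lemma rOf_sub (v w : 𝔼) : rOf (v - w) = rOf v - rOf w := rfl

@[simp] lemma rOf_smul (c : ℝ) (v : 𝔼) : rOf (c • v) = c • rOf v := rfl

@[simp] lemma thOf_smul (c : ℝ) (v : 𝔼) : thOf (c • v) = c • thOf v := rfl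

@[simp] lemma toE_rOf_thOf (z : 𝔼) : toE (rOf z) (thOf z) = z := by
  ext (i | i) <;> rfl

lemma ext_rOf_thOf {v w : 𝔼} (hr : rOf v = rOf w) (hθ : thOf v = thOf w) : v = w := by
  rw [← toE_rOf_thOf v, ← toE_rOf_thOf w, hr, hθ]

lemma inner_eq_sum_rOf_add_sum_thOf (v w : 𝔼) :
    inner ℝ v w = ∑ i, rOf v i * rOf w i + ∑ i, thOf v i * thOf w i := by
  simp only [PiLp.inner_apply, Fintype.sum_sum_type, RCLike.inner_apply, conj_trivial]
  simp only [rOf, thOf, EuclideanSpace.equiv, mul_comm]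
  rfl

lemma norm_sq_eq_sum_rOf_add_sum_thOf (v : 𝔼) :
    ‖v‖ ^ 2 = ∑ i, rOf v i ^ 2 + ∑ i, thOf v i ^ 2 := by
  rw [← real_inner_self_eq_norm_sq, inner_eq_sum_rOf_add_sum_thOf]
  simp only [sq]

lemma sum_rOf_sq_le_norm_sq (v : 𝔼) : ∑ i, rOf v i ^ 2 ≤ ‖v‖ ^ 2 := by
  rw [norm_sq_eq_sum_rOf_add_sum_thOf]
  exact le_add_of_nonneg_right (by positivity)

lemma sum_rOf_sub_smul_sq (x w : 𝔼) (t : ℝ) :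
    ∑ i, rOf (x - t • w) i ^ 2
      = ∑ i, rOf x i ^ 2 - 2 * t * ∑ i, rOf x i * rOf w i + t ^ 2 * ∑ i, rOf w i ^ 2 := by
  simp only [rOf_sub, rOf_smul, Pi.sub_apply, Pi.smul_apply, smul_eq_mul, Finset.mul_sum,
    ← Finset.sum_sub_distrib, ← Finset.sum_add_distrib]
  exact Finset.sum_congr rfl fun i _ => by ring

noncomputable def radialScale (c : ℝ) (z : 𝔼) : 𝔼 := toE (c • rOf z) (thOf z)

@[simp] lemma rOf_radialScale (c : ℝ) (z : 𝔼) : rOf (radialScale c z) = c • rOf z := rfl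

@[simp] lemma thOf_radialScale (c : ℝ) (z : 𝔼) : thOf (radialScale c z) = thOf z := rfl

lemma radialScale_add_smul (c t : ℝ) (p v : 𝔼) :
    radialScale c (p + t • v) = radialScale c p + t • radialScale c v := by
  apply ext_rOf_thOf <;> simp only [rOf_radialScale, thOf_radialScale, rOf_add, thOf_add,
    rOf_smul, thOf_smul, smul_add, smul_comm c t]

lemma norm_sq_radialScale (c : ℝ) (v : 𝔼) :
    ‖radialScale c v‖ ^ 2 = c ^ 2 * ∑ i, rOf v i ^ 2 + ∑ i, thOf v i ^ 2 := by
  simp [norm_sq_eq_sum_rOf_add_sum_thOf, mul_pow, Finset.mul_sum]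

variable {F : EuclideanSpace ℝ (Fin d ⊕ Fin d) → ℝ} {n : ℕ}

def IsRadiallyHomogeneous (F : 𝔼 → ℝ) (n : ℕ) : Prop :=
  ∀ (s : ℝ) (r θ : Fin d → ℝ), F (toE (s • r) θ) = s ^ n * F (toE r θ)

namespace IsRadiallyHomogeneous

lemma apply_radialScale (h : IsRadiallyHomogeneous F n) (c : ℝ) (z : 𝔼) :
    F (radialScale c z) = c ^ n * F z := by
  rw [radialScale, h, toE_rOf_thOf]

lemma apply_normalize (h : IsRadiallyHomogeneous F 4) (y : 𝔼) :
    F (toE ((√(∑ i, rOf y i ^ 2))⁻¹ • rOf y) (thOf y)) = F y / (∑ i, rOf y i ^ 2) ^ 2 := by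
  rw [h, toE_rOf_thOf, inv_pow, show 4 = 2 * 2 from rfl, pow_mul, Real.sq_sqrt (by positivity),
    div_eq_inv_mul]

lemma sum_rOf_mul_rOf_gradient (h : IsRadiallyHomogeneous F n) (hF : Differentiable ℝ F)
    (x : 𝔼) : ∑ i, rOf x i * rOf (gradient F x) i = n * F x := by
  set v : 𝔼 := toE (rOf x) 0
  have hline : ∀ s : ℝ, F (x + s • v) = (1 + s) ^ n * F x := fun s => by
    rw [← h.apply_radialScale]
    congr 1
    apply ext_rOf_thOf <;> simp [v, add_smul]
  have hderiv := hasDerivAt_comp_line hF x v 0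
  rw [funext hline] at hderiv
  have heuler := hderiv.unique (by
    simpa using (((hasDerivAt_id (0 : ℝ)).const_add 1).pow n).mul_const (F x))
  rw [zero_smul, add_zero, ← inner_gradient_left, inner_eq_sum_rOf_add_sum_thOf] at heuler
  simpa [v, mul_comm] using heuler

lemma sum_rOf_sub_smul_gradient_sq (h : IsRadiallyHomogeneous F 4) (hF : Differentiable ℝ F)
    {x : 𝔼} (hx : ∑ i, rOf x i ^ 2 = 1) (t : ℝ) :
    ∑ i, rOf (x - t • gradient F x) i ^ 2
      = 1 - 8 * t * F x + t ^ 2 * ∑ i, rOf (gradient F x) i ^ 2 := by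
  rw [sum_rOf_sub_smul_sq, hx, h.sum_rOf_mul_rOf_gradient hF]
  push_cast
  ring

lemma fderiv_fderiv_apply_self_le (h : IsRadiallyHomogeneous F 4) (hF : Differentiable ℝ F)
    (hF' : Differentiable ℝ (fderiv ℝ F)) {L : ℝ}
    (hHess : ∀ z : 𝔼, √(∑ i, rOf z i ^ 2) ≤ 2 → ‖fderiv ℝ (fderiv ℝ F) z‖ ≤ L)
    {p : 𝔼} (hp : ∑ i, rOf p i ^ 2 ≤ 2) (v : 𝔼) :
    fderiv ℝ (fderiv ℝ F) p v v ≤ L / 2 * ‖v‖ ^ 2 := by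
  -- `radialScale √2` moves `p` into the region `‖r‖ ≤ 2`, multiplies the quadratic form by `4`
  -- and `‖v‖²` by at most `2`
  set c := √2
  have hc2 : c ^ 2 = 2 := Real.sq_sqrt zero_le_two
  set A := fderiv ℝ (fderiv ℝ F) (radialScale c p)
  set w := radialScale c v
  have hscale : A w w = 4 * fderiv ℝ (fderiv ℝ F) p v v := by
    rw [show (4 : ℝ) = c ^ 4 by rw [show 4 = 2 * 2 from rfl, pow_mul, hc2]; norm_num]
    exact fderiv_fderiv_apply_eq_of_comp_line_eq hF hF' fun s => by
      rw [← radialScale_add_smul, h.apply_radialScale]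
  have hA : ‖A‖ ≤ L := hHess _ <| (Real.sqrt_le_left zero_le_two).2 <| by
    simp only [rOf_radialScale, Pi.smul_apply, smul_eq_mul, mul_pow, ← Finset.mul_sum, hc2]
    linarith
  have hw : ‖w‖ ^ 2 ≤ 2 * ‖v‖ ^ 2 := by
    rw [norm_sq_radialScale, hc2, norm_sq_eq_sum_rOf_add_sum_thOf]
    nlinarith [Finset.sum_nonneg fun i (_ : i ∈ Finset.univ) => sq_nonneg (thOf v i)]
  have hL : 0 ≤ L := (norm_nonneg A).trans hA
  have hAw : A w w ≤ L * ‖w‖ ^ 2 := calc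
    A w w ≤ ‖A‖ * ‖w‖ * ‖w‖ := (le_abs_self _).trans (A.le_opNorm₂ w w)
    _ ≤ L * ‖w‖ ^ 2 := by rw [mul_assoc, ← sq]; gcongr
  nlinarith [mul_le_mul_of_nonneg_left hw hL]

end IsRadiallyHomogeneous

end RadialCoordinates

lemma sixteen_mul_sq_le_mul_rpow {f μ α : ℝ} (hf : 0 < f) (hμ : 0 ≤ μ) (hα : α < 2)
    (h : f ≤ (μ / 16) ^ (2 - α)⁻¹) : 16 * f ^ 2 ≤ μ * f ^ α := by
  have hβ : 0 < 2 - α := by linarith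
  have hfβ : f ^ (2 - α) ≤ μ / 16 := by
    simpa [← Real.rpow_mul (by positivity : 0 ≤ μ / 16), inv_mul_cancel₀ hβ.ne'] using
      Real.rpow_le_rpow hf.le h hβ.le
  have hsplit : f ^ 2 = f ^ (2 - α) * f ^ α := by
    rw [← Real.rpow_add hf, sub_add_cancel, Real.rpow_two]
  rw [hsplit]
  nlinarith [Real.rpow_pos_of_pos hf α]

lemma div_sq_le_sub_of_descent {f fy G P a m : ℝ} (ha : 0 < a) (hf : 0 < f) (hfy : 0 ≤ fy)
    (hdesc : fy ≤ f - a / 2 * G) (hG : 4 * P ≤ G) (hP : 16 * f ^ 2 ≤ P)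
    (hm : 1 - 8 * a * f ≤ m) (h8 : 0 < 1 - 8 * a * f) : fy / m ^ 2 ≤ f - a * P := by
  have hP0 : 0 ≤ P := (by positivity : (0 : ℝ) ≤ 16 * f ^ 2).trans hP
  have haP : 16 * a * f ^ 2 ≤ a * P := by nlinarith
  have hfP : 0 ≤ f - a * P := by nlinarith
  have hm2 : 1 - 16 * a * f ≤ m ^ 2 := by
    nlinarith [pow_le_pow_left₀ h8.le hm 2, sq_nonneg (a * f)]
  -- half of the descent pays for the contraction, the other half for the loss `1 - 16 a f` in `m²`
  have hfy' : fy ≤ (1 - 16 * a * f) * (f - a * P) := by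
    nlinarith [mul_le_mul_of_nonneg_left hG ha.le,
      mul_nonneg (mul_pos ha hf).le (mul_nonneg ha.le hP0)]
  rw [div_le_iff₀ (by nlinarith)]
  nlinarith

theorem statement19_general {d : ℕ} (F : EuclideanSpace ℝ (Fin d ⊕ Fin d) → ℝ)
    (hF0 : ∀ x, 0 ≤ F x) (hC2 : ContDiff ℝ 2 F)
    (hhom : ∀ (s : ℝ) (r θ : Fin d → ℝ), F (toE (s • r) θ) = s ^ 4 * F (toE r θ))
    (L : ℝ)
    (hHess : ∀ x : EuclideanSpace ℝ (Fin d ⊕ Fin d),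
      Real.sqrt (∑ i, rOf x i ^ 2) ≤ 2 → ‖fderiv ℝ (fderiv ℝ F) x‖ ≤ L)
    (x : EuclideanSpace ℝ (Fin d ⊕ Fin d))
    (hx1 : ∑ i, rOf x i ^ 2 = 1) (hxpos : 0 < F x)
    (μ α : ℝ) (hμ : 0 < μ) (hα2 : α < 2)
    (hKL : 4 * μ * F x ^ α ≤ ‖gradient F x‖ ^ 2)
    (hsmall : F x ≤ (μ / 16) ^ ((2 - α)⁻¹))
    (a : ℝ) (ha0 : 0 < a) (haL : a ≤ 2 / L)
    (hagrad : a * ‖gradient F x‖ ≤ 1) (haF : 16 * a * F x < 1) :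
    1 - 8 * a * F x ≤ ∑ i, rOf (x - a • gradient F x) i ^ 2 ∧
    0 < 1 - 8 * a * F x ∧
    rOf (x - a • gradient F x) ≠ 0 ∧
    F (toE ((Real.sqrt (∑ i, rOf (x - a • gradient F x) i ^ 2))⁻¹ •
          rOf (x - a • gradient F x))
        (thOf (x - a • gradient F x)))
      ≤ (1 - μ * a * F x ^ (α - 1)) * F x := by
  have hF : Differentiable ℝ F := hC2.differentiable (by norm_num)
  have hF' : Differentiable ℝ (fderiv ℝ F) :=
    (hC2.fderiv_right (m := 1) (by norm_num)).differentiable (by norm_num)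
  have hrad := IsRadiallyHomogeneous.sum_rOf_sub_smul_gradient_sq hhom hF hx1
  set g := gradient F x
  have hGr : 0 ≤ ∑ i, rOf g i ^ 2 := by positivity
  have hL : 0 ≤ L := (norm_nonneg (fderiv ℝ (fderiv ℝ F) x)).trans (hHess x (by simp [hx1]))
  have hdesc : F (x - a • g) ≤ F x - a / 2 * ‖g‖ ^ 2 := by
    refine apply_sub_smul_gradient_le hF hF' x ha0.le (mul_le_of_le_div₀ zero_le_two hL haL)
      fun t ht => IsRadiallyHomogeneous.fderiv_fderiv_apply_self_le hhom hF hF' hHess ?_ g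
    have hag : (a * ‖g‖) ^ 2 ≤ 1 := pow_le_one₀ (by positivity) hagrad
    rw [hrad]
    nlinarith [pow_le_pow_left₀ ht.1 ht.2 2, sum_rOf_sq_le_norm_sq g, mul_nonneg ht.1 hxpos.le]
  have h8 : 0 < 1 - 8 * a * F x := by linarith
  have hm : 1 - 8 * a * F x ≤ ∑ i, rOf (x - a • g) i ^ 2 := by
    rw [hrad]; nlinarith
  refine ⟨hm, h8, fun h0 => by simp [h0] at hm; linarith, ?_⟩
  rw [IsRadiallyHomogeneous.apply_normalize hhom,
    show (1 - μ * a * F x ^ (α - 1)) * F x = F x - a * (μ * F x ^ α) by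
      rw [Real.rpow_sub_one hxpos.ne']; field_simp]
  exact div_sq_le_sub_of_descent ha0 hxpos (hF0 _) hdesc (by linarith)
    (sixteen_mul_sq_le_mul_rpow hxpos hμ.le hα2 hsmall) hm h8

/-- one-step contraction of normalized gradient descent: let `F ≥ 0` be
`C²` on `ℝ^d × ℝ^d` and degree-4 homogeneous in the radial variables, with Hessian bounded
by `L` on `{‖r‖ ≤ 2}`. If `x = (r,θ)` has `‖r‖ = 1`, `F(x) > 0`, satisfies the uniform KL
condition `‖∇F(x)‖² ≥ 4μ F(x)^α` with `F(x) ≤ (μ/16)^{1/(2−α)}`, and the step size `a > 0`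
satisfies `a ≤ 2/L`, `a‖∇F(x)‖ ≤ 1` and `16 a F(x) < 1`, then writing
`y = x − a ∇F(x) = (r_y, θ_y)` one has `‖r_y‖² ≥ 1 − 8a F(x) > 0` (so `r_y ≠ 0`), and the
normalized iterate `x⁺ = (r_y/‖r_y‖, θ_y)` satisfies
`F(x⁺) ≤ (1 − μ a F(x)^{α−1}) F(x)`. -/
theorem statement19 {d : ℕ} (F : EuclideanSpace ℝ (Fin d ⊕ Fin d) → ℝ)
    (hF0 : ∀ x, 0 ≤ F x) (hC2 : ContDiff ℝ 2 F)
    (hhom : ∀ (s : ℝ) (r θ : Fin d → ℝ), F (toE (s • r) θ) = s ^ 4 * F (toE r θ))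
    (L : ℝ) (hLpos : 0 < L)
    (hHess : ∀ x : EuclideanSpace ℝ (Fin d ⊕ Fin d),
      Real.sqrt (∑ i, rOf x i ^ 2) ≤ 2 → ‖fderiv ℝ (fderiv ℝ F) x‖ ≤ L)
    (x : EuclideanSpace ℝ (Fin d ⊕ Fin d))
    (hx1 : ∑ i, rOf x i ^ 2 = 1) (hxpos : 0 < F x)
    (μ α : ℝ) (hμ : 0 < μ) (hα0 : 0 ≤ α) (hα2 : α < 2)
    (hKL : 4 * μ * F x ^ α ≤ ‖gradient F x‖ ^ 2)
    (hsmall : F x ≤ (μ / 16) ^ ((2 - α)⁻¹))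
    (a : ℝ) (ha0 : 0 < a) (haL : a ≤ 2 / L)
    (hagrad : a * ‖gradient F x‖ ≤ 1) (haF : 16 * a * F x < 1) :
    1 - 8 * a * F x ≤ ∑ i, rOf (x - a • gradient F x) i ^ 2 ∧
    0 < 1 - 8 * a * F x ∧
    rOf (x - a • gradient F x) ≠ 0 ∧
    F (toE ((Real.sqrt (∑ i, rOf (x - a • gradient F x) i ^ 2))⁻¹ •
          rOf (x - a • gradient F x))
        (thOf (x - a • gradient F x)))
      ≤ (1 - μ * a * F x ^ (α - 1)) * F x :=
  statement19_general F hF0 hC2 hhom L hHess x hx1 hxpos μ α hμ hα2 hKL hsmall a ha0 haL hagrad haF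
end
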